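/- arXiv:1803.06363 — 4 statements merged into one kernel-verified Lean document; each statement's English description precedes it below -/
import Mathlib

section
/- Let Q ∈ SO(3) and let u ∈ ℝ³ be a unit vector. Then uᵀQu ≥ (tr(Q) − 1)/2. In particular, if Ψ(Q) = (1/2)tr(I₃ − Q) < 1, then e₃ᵀQe₃ > 0, where e₃ = (0,0,1)ᵀ. -/
/-!
For `Q ∈ SO(3)` the adjugate is `Qᵀ`, so the `3 × 3` Cayley–Hamilton identity
`adj Q = Q² - (tr Q) Q + (tr adj Q) I` becomes `Q² = t Q - t I + Qᵀ` with `t = tr Q`.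
Consequently `S = Q + Qᵀ - (t - 1) I` is symmetric with `S² = (3 - t) S`, and since `t ≤ 3`
it is positive semidefinite: `(3 - t) uᵀSu = |Su|²`. Expanding, `uᵀSu = 2 uᵀQu - (t - 1) |u|²`.
For `u = e₃`, the hypothesis `Ψ(Q) < 1` says `t > 1`.
-/

open Matrix

namespace Matrix

theorem adjugate_fin_three_eq {R : Type*} [CommRing R] (A : Matrix (Fin 3) (Fin 3) R) :
    A.adjugate = A * A - A.trace • A + A.adjugate.trace • 1 := by
  ext i j
  fin_cases i <;> fin_cases j <;>
    simp [adjugate_fin_three, trace_fin_three, mul_apply, Fin.sum_univ_three] <;> ring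

theorem adjugate_eq_transpose_of_det_eq_one {n R : Type*} [Fintype n] [DecidableEq n]
    [CommRing R] {Q : Matrix n n R} (hQ : Qᵀ * Q = 1) (hdet : Q.det = 1) : Q.adjugate = Qᵀ := by
  rw [← inv_eq_left_inv hQ, inv_def, hdet, Ring.inverse_one, one_smul]

theorem trace_le_card_of_transpose_mul_self_eq_one {n : Type*} [Fintype n] [DecidableEq n]
    {Q : Matrix n n ℝ} (hQ : Qᵀ * Q = 1) : Q.trace ≤ Fintype.card n := by
  have hQ' : Q ∈ orthogonalGroup n ℝ := (mem_orthogonalGroup_iff' n ℝ).2 hQ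
  calc Q.trace = ∑ i, Q i i := rfl
    _ ≤ ∑ _ : n, (1 : ℝ) := Finset.sum_le_sum fun i _ =>
        (le_abs_self _).trans (entry_norm_bound_of_unitary hQ' i i)
    _ = Fintype.card n := by simp

theorem IsSymm.dotProduct_mulVec_nonneg_of_mul_self_eq_smul {n R : Type*} [Fintype n]
    [CommRing R] [LinearOrder R] [IsStrictOrderedRing R] {S : Matrix n n R} (hS : S.IsSymm)
    {c : R} (hc : 0 ≤ c) (hSS : S * S = c • S) (u : n → R) : 0 ≤ u ⬝ᵥ S *ᵥ u := by
  have key : (S *ᵥ u) ⬝ᵥ (S *ᵥ u) = c * (u ⬝ᵥ S *ᵥ u) := by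
    rw [dotProduct_mulVec, vecMul_mulVec, ← dotProduct_mulVec, hS.eq, hSS, smul_mulVec,
      dotProduct_smul, smul_eq_mul]
  rcases hc.eq_or_lt with rfl | hc
  · rw [zero_mul, dotProduct_self_eq_zero] at key
    rw [key, dotProduct_zero]
  · refine nonneg_of_mul_nonneg_right ?_ hc
    rw [← key]
    exact Finset.sum_nonneg fun i _ => mul_self_nonneg _

section SpecialOrthogonal

variable {n R : Type*} [Fintype n] [DecidableEq n] [CommRing R]

/-- For the rotation by angle `θ` about the unit axis `a` this is `2 (1 - cos θ) a aᵀ`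
(Rodrigues: `Q + Qᵀ = 2 cos θ I + 2 (1 - cos θ) a aᵀ` and `tr Q = 1 + 2 cos θ`). -/
def axisForm (Q : Matrix n n R) : Matrix n n R :=
  Q + Qᵀ - (Q.trace - 1) • 1

theorem isSymm_axisForm (Q : Matrix n n R) : (axisForm Q).IsSymm :=
  (isSymm_add_transpose_self Q).sub (isSymm_one.smul _)

theorem dotProduct_axisForm_mulVec (Q : Matrix n n R) (u : n → R) :
    u ⬝ᵥ axisForm Q *ᵥ u = 2 * (u ⬝ᵥ Q *ᵥ u) - (Q.trace - 1) * (u ⬝ᵥ u) := by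
  have hQt : u ⬝ᵥ Qᵀ *ᵥ u = u ⬝ᵥ Q *ᵥ u := by
    rw [mulVec_transpose, dotProduct_comm, ← dotProduct_mulVec]
  simp only [axisForm, add_mulVec, sub_mulVec, smul_mulVec, one_mulVec, dotProduct_add,
    dotProduct_sub, dotProduct_smul, smul_eq_mul, hQt]
  ring

variable {Q : Matrix (Fin 3) (Fin 3) R}

theorem mul_self_eq_trace_smul_sub_add_transpose (hQ : Qᵀ * Q = 1) (hdet : Q.det = 1) :
    Q * Q = Q.trace • Q - Q.trace • 1 + Qᵀ := by
  have h := adjugate_fin_three_eq Q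
  rw [adjugate_eq_transpose_of_det_eq_one hQ hdet, trace_transpose] at h
  rw [h]
  abel

theorem axisForm_mul_self (hQ : Qᵀ * Q = 1) (hdet : Q.det = 1) :
    axisForm Q * axisForm Q = (3 - Q.trace) • axisForm Q := by
  have hQQt : Q * Qᵀ = 1 := mul_eq_one_comm.mp hQ
  have hsq := mul_self_eq_trace_smul_sub_add_transpose hQ hdet
  have hsqt := mul_self_eq_trace_smul_sub_add_transpose (Q := Qᵀ)
    (by rwa [transpose_transpose]) (by rwa [det_transpose])
  rw [trace_transpose, transpose_transpose] at hsqt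
  simp only [axisForm, add_mul, mul_add, sub_mul, mul_sub, smul_mul_assoc, mul_smul_comm,
    one_mul, mul_one, hsq, hsqt, hQ, hQQt]
  module

end SpecialOrthogonal

theorem trace_sub_one_mul_dotProduct_le {Q : Matrix (Fin 3) (Fin 3) ℝ} (hQ : Qᵀ * Q = 1)
    (hdet : Q.det = 1) (u : Fin 3 → ℝ) : (Q.trace - 1) * (u ⬝ᵥ u) ≤ 2 * (u ⬝ᵥ Q *ᵥ u) := by
  have htrace : 0 ≤ 3 - Q.trace :=
    sub_nonneg.2 (by simpa using trace_le_card_of_transpose_mul_self_eq_one hQ)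
  have h := (isSymm_axisForm Q).dotProduct_mulVec_nonneg_of_mul_self_eq_smul htrace
    (axisForm_mul_self hQ hdet) u
  rw [dotProduct_axisForm_mulVec] at h
  linarith

end Matrix

/-- For `Q ∈ SO(3)` and a unit vector `u`, `uᵀQu ≥ (tr Q − 1)/2`; in particular,
if `Ψ(Q) = (1/2)tr(I₃ − Q) < 1` then `e₃ᵀQe₃ > 0`. -/
theorem so3_quadratic_form_lower_bound (Q : Matrix (Fin 3) (Fin 3) ℝ)
    (hQ : Qᵀ * Q = 1) (hdet : Q.det = 1)
    (u : Fin 3 → ℝ) (hu : u ⬝ᵥ u = 1) :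
    u ⬝ᵥ Q.mulVec u ≥ (Q.trace - 1) / 2 ∧
    ((1 / 2) * (1 - Q : Matrix (Fin 3) (Fin 3) ℝ).trace < 1 →
      0 < (![0, 0, 1] : Fin 3 → ℝ) ⬝ᵥ Q.mulVec ![0, 0, 1]) := by
  have hbound : ∀ v : Fin 3 → ℝ, v ⬝ᵥ v = 1 → (Q.trace - 1) / 2 ≤ v ⬝ᵥ Q *ᵥ v := fun v hv => by
    have h := trace_sub_one_mul_dotProduct_le hQ hdet v
    rw [hv, mul_one] at h
    linarith
  refine ⟨hbound u hu, fun hΨ => ?_⟩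
  have he₃ := hbound ![0, 0, 1] (by simp [dotProduct, Fin.sum_univ_three])
  rw [trace_sub, trace_one, Fintype.card_fin] at hΨ
  linarith
end

section
/- Let Q ∈ SO(3), define Ψ(Q) = (1/2)tr(I₃ − Q), and let e_R(Q) = (1/2)(Q − Qᵀ)^∨ ∈ ℝ³, where ∨ maps a 3×3 skew-symmetric matrix S to the vector (S₃₂, S₁₃, S₂₁)ᵀ. Then ‖e_R(Q)‖² = Ψ(Q)(2 − Ψ(Q)). -/
open Matrix

/-- The vee map sending a `3×3` (skew-symmetric) matrix `S` to `(S₃₂, S₁₃, S₂₁)ᵀ`,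
viewed as a vector of `ℝ³` with the Euclidean norm. -/
def vee (S : Matrix (Fin 3) (Fin 3) ℝ) : EuclideanSpace ℝ (Fin 3) :=
  WithLp.toLp 2 ![S 2 1, S 0 2, S 1 0]

/-- The attitude error function `Ψ(Q) = (1/2)tr(I₃ − Q)`. -/
noncomputable def Psi (Q : Matrix (Fin 3) (Fin 3) ℝ) : ℝ := (1 / 2) * (1 - Q).trace

/-- The attitude error vector `e_R(Q) = (1/2)(Q − Qᵀ)^∨`. -/
noncomputable def eR (Q : Matrix (Fin 3) (Fin 3) ℝ) : EuclideanSpace ℝ (Fin 3) :=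
  (1 / 2 : ℝ) • vee (Q - Qᵀ)

/-- For `Q ∈ SO(3)`: `‖e_R(Q)‖² = Ψ(Q)(2 − Ψ(Q))`. -/
theorem norm_sq_eR_eq_Psi_mul (Q : Matrix (Fin 3) (Fin 3) ℝ)
    (hQ : Qᵀ * Q = 1) (hdet : Q.det = 1) :
    ‖eR Q‖ ^ 2 = Psi Q * (2 - Psi Q) := by
  have hadj : Q.adjugate = Qᵀ := by
    have h2 : Q * Qᵀ = 1 := mul_eq_one_comm.mp hQ
    calc Q.adjugate = Q.adjugate * (Q * Qᵀ) := by rw [h2, mul_one]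
      _ = (Q.adjugate * Q) * Qᵀ := by rw [mul_assoc]
      _ = Qᵀ := by rw [Matrix.adjugate_mul, hdet, one_smul, one_mul]
  rw [Matrix.adjugate_fin_three] at hadj
  have a0 := congrFun (congrFun hadj 0) 0
  have a1 := congrFun (congrFun hadj 1) 1
  have a2 := congrFun (congrFun hadj 2) 2
  simp [Matrix.transpose_apply] at a0 a1 a2
  have h0 := congrFun (congrFun hQ 0) 0
  have h1 := congrFun (congrFun hQ 1) 1
  have h2 := congrFun (congrFun hQ 2) 2
  simp [Matrix.mul_apply, Fin.sum_univ_three, Matrix.one_apply,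
    Matrix.transpose_apply] at h0 h1 h2
  have hn : ‖eR Q‖ ^ 2 = (eR Q 0) ^ 2 + (eR Q 1) ^ 2 + (eR Q 2) ^ 2 := by
    rw [EuclideanSpace.norm_eq, Real.sq_sqrt (by positivity)]
    simp [Fin.sum_univ_three, Real.norm_eq_abs, sq_abs]
  rw [hn]
  simp only [eR, vee, Pi.smul_apply, PiLp.smul_apply, Matrix.sub_apply, Matrix.transpose_apply,
    Matrix.cons_val_zero, Matrix.cons_val_one, Matrix.head_cons, Matrix.cons_val_two,
    Matrix.tail_cons, smul_eq_mul, Psi, Matrix.trace_fin_three, Matrix.sub_apply,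
    Matrix.one_apply_eq]
  nlinarith [a0, a1, a2, h0, h1, h2, sq_nonneg (Q 0 0 + Q 1 1 + Q 2 2)]
end

section
/- Let Q ∈ SO(3), define Ψ(Q) = (1/2)tr(I₃ − Q) and e_R(Q) = (1/2)(Q − Qᵀ)^∨, and suppose Ψ(Q) ≤ ψ₁ for some constant 0 ≤ ψ₁ < 2. Then (1/2)‖e_R(Q)‖² ≤ Ψ(Q) ≤ (1/(2 − ψ₁))‖e_R(Q)‖². -/
open Matrix

/-- For `Q ∈ SO(3)` with `Ψ(Q) ≤ ψ₁ < 2`: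
`(1/2)‖e_R(Q)‖² ≤ Ψ(Q) ≤ (1/(2 − ψ₁))‖e_R(Q)‖²`. -/
theorem Psi_comparable_norm_sq_eR (Q : Matrix (Fin 3) (Fin 3) ℝ)
    (hQ : Qᵀ * Q = 1) (hdet : Q.det = 1)
    (ψ₁ : ℝ) (hψ₁ : 0 ≤ ψ₁) (hψ₁' : ψ₁ < 2) (hPsi : Psi Q ≤ ψ₁) :
    (1 / 2) * ‖eR Q‖ ^ 2 ≤ Psi Q ∧ Psi Q ≤ (1 / (2 - ψ₁)) * ‖eR Q‖ ^ 2 := by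
  -- right inverse
  have hQ' : Q * Qᵀ = 1 := mul_eq_one_comm.mp hQ
  -- adjugate equals transpose
  have hadj : Q.adjugate = Qᵀ := by
    have h1 : Q * Q.adjugate = 1 := by rw [Matrix.mul_adjugate, hdet, one_smul]
    calc Q.adjugate = (Qᵀ * Q) * Q.adjugate := by rw [hQ, one_mul]
      _ = Qᵀ * (Q * Q.adjugate) := by rw [Matrix.mul_assoc]
      _ = Qᵀ := by rw [h1, mul_one]
  -- scalar cofactor equations on the diagonal
  have hA : Q 1 1 * Q 2 2 - Q 1 2 * Q 2 1 = Q 0 0 := by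
    have := congrFun (congrFun hadj 0) 0
    simpa [Matrix.adjugate_fin_three, Matrix.transpose_apply] using this
  have hE : Q 0 0 * Q 2 2 - Q 0 2 * Q 2 0 = Q 1 1 := by
    have := congrFun (congrFun hadj 1) 1
    simpa [Matrix.adjugate_fin_three, Matrix.transpose_apply] using this
  have hI : Q 0 0 * Q 1 1 - Q 0 1 * Q 1 0 = Q 2 2 := by
    have := congrFun (congrFun hadj 2) 2
    simpa [Matrix.adjugate_fin_three, Matrix.transpose_apply] using this
  -- row norms
  have hR0 : Q 0 0 * Q 0 0 + Q 0 1 * Q 0 1 + Q 0 2 * Q 0 2 = 1 := by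
    have := congrFun (congrFun hQ' 0) 0
    simpa [Matrix.mul_apply, Fin.sum_univ_three, Matrix.transpose_apply, Matrix.one_apply] using this
  have hR1 : Q 1 0 * Q 1 0 + Q 1 1 * Q 1 1 + Q 1 2 * Q 1 2 = 1 := by
    have := congrFun (congrFun hQ' 1) 1
    simpa [Matrix.mul_apply, Fin.sum_univ_three, Matrix.transpose_apply, Matrix.one_apply] using this
  have hR2 : Q 2 0 * Q 2 0 + Q 2 1 * Q 2 1 + Q 2 2 * Q 2 2 = 1 := by
    have := congrFun (congrFun hQ' 2) 2
    simpa [Matrix.mul_apply, Fin.sum_univ_three, Matrix.transpose_apply, Matrix.one_apply] using this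
  -- norm squared of eR
  have hnorm : ‖eR Q‖ ^ 2 =
      (1/4) * ((Q 2 1 - Q 1 2)^2 + (Q 0 2 - Q 2 0)^2 + (Q 1 0 - Q 0 1)^2) := by
    have h1 : ‖eR Q‖ ^ 2 = (eR Q 0)^2 + (eR Q 1)^2 + (eR Q 2)^2 := by
      rw [EuclideanSpace.norm_eq]
      rw [Real.sq_sqrt (by positivity)]
      simp [Fin.sum_univ_three, sq_abs]
    rw [h1]
    simp only [eR, vee, PiLp.smul_apply, smul_eq_mul, Matrix.sub_apply, Matrix.transpose_apply]
    norm_num [Matrix.cons_val_zero, Matrix.cons_val_one, Matrix.cons_val_two]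
    try ring
  have hPsiv : Psi Q = (1/2) * (3 - (Q 0 0 + Q 1 1 + Q 2 2)) := by
    simp [Psi, Matrix.trace, Matrix.diag, Fin.sum_univ_three, Matrix.sub_apply, Matrix.one_apply]
    try ring
  -- key identity : ‖eR‖² = Ψ(2-Ψ)
  have key : ‖eR Q‖ ^ 2 = Psi Q * (2 - Psi Q) := by
    rw [hnorm, hPsiv]
    linear_combination (1/4) * (hR0 + hR1 + hR2) + (1/2) * (hA + hE + hI)
  have hPsi0 : 0 ≤ Psi Q := by nlinarith [sq_nonneg ‖eR Q‖, key, sq_nonneg (2 - Psi Q)]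
  constructor
  · nlinarith [key, hPsi0]
  · have h2 : 0 < 2 - ψ₁ := by linarith
    rw [key, div_mul_eq_mul_div, le_div_iff₀ h2]
    nlinarith [hPsi0, hPsi]
end

section
/- Let Q ∈ SO(3), define Ψ(Q) = (1/2)tr(I₃ − Q) and e_R(Q) = (1/2)(Q − Qᵀ)^∨, and suppose Ψ(Q) ≤ ψ₁ for some constant 0 ≤ ψ₁ ≤ 1. Then ‖e_R(Q)‖ ≤ √(ψ₁(2 − ψ₁)); in particular if ψ₁ < 1 then ‖e_R(Q)‖ ≤ β := √(ψ₁(2 − ψ₁)) < 1. -/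
open Matrix

/-- For `Q ∈ SO(3)` with `Ψ(Q) ≤ ψ₁ ≤ 1`: `‖e_R(Q)‖ ≤ √(ψ₁(2 − ψ₁))`, and if moreover
`ψ₁ < 1` then `β = √(ψ₁(2 − ψ₁)) < 1`. -/
theorem norm_eR_le_beta (Q : Matrix (Fin 3) (Fin 3) ℝ)
    (hQ : Qᵀ * Q = 1) (hdet : Q.det = 1)
    (ψ₁ : ℝ) (hψ₁ : 0 ≤ ψ₁) (hψ₁' : ψ₁ ≤ 1) (hPsi : Psi Q ≤ ψ₁) :
    ‖eR Q‖ ≤ Real.sqrt (ψ₁ * (2 - ψ₁)) ∧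
    (ψ₁ < 1 → Real.sqrt (ψ₁ * (2 - ψ₁)) < 1) := by
  -- adjugate Q = Qᵀ
  have hQ' : Q * Qᵀ = 1 := mul_eq_one_comm.mp hQ
  have hmuladj : Q * Q.adjugate = 1 := by
    have := Matrix.mul_adjugate Q
    rwa [hdet, one_smul] at this
  have hadj : Q.adjugate = Qᵀ := by
    calc Q.adjugate = 1 * Q.adjugate := (one_mul _).symm
      _ = (Qᵀ * Q) * Q.adjugate := by rw [hQ]
      _ = Qᵀ * (Q * Q.adjugate) := by rw [Matrix.mul_assoc]
      _ = Qᵀ := by rw [hmuladj, Matrix.mul_one]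
  -- cofactor equations (diagonal of adjugate)
  have hc0 := congrFun (congrFun hadj 0) 0
  have hc1 := congrFun (congrFun hadj 1) 1
  have hc2 := congrFun (congrFun hadj 2) 2
  rw [Matrix.adjugate_fin_three] at hc0 hc1 hc2
  simp [Matrix.transpose_apply] at hc0 hc1 hc2
  -- column norm equations
  have hd0 := congrFun (congrFun hQ 0) 0
  have hd1 := congrFun (congrFun hQ 1) 1
  have hd2 := congrFun (congrFun hQ 2) 2
  simp [Matrix.mul_apply, Fin.sum_univ_three, Matrix.one_apply,
    Matrix.transpose_apply] at hd0 hd1 hd2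
  -- key identity
  have hPsidef : Psi Q = (3 - (Q 0 0 + Q 1 1 + Q 2 2)) / 2 := by
    simp [Psi, Matrix.trace, Matrix.diag, Fin.sum_univ_three, Matrix.one_apply]
    ring
  have key : ‖eR Q‖ ^ 2 = Psi Q * (2 - Psi Q) := by
    have hn : ‖eR Q‖ ^ 2 = ∑ i : Fin 3, (eR Q i) ^ 2 := by
      rw [EuclideanSpace.norm_eq]
      rw [Real.sq_sqrt (by positivity)]
      congr 1; ext i; rw [Real.norm_eq_abs, sq_abs]
    have he : ∀ i, eR Q i = (1 / 2 : ℝ) * vee (Q - Qᵀ) i := fun i => rfl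
    rw [hn, Fin.sum_univ_three, he, he, he, hPsidef]
    simp [vee, Matrix.sub_apply, Matrix.transpose_apply]
    linear_combination (1/4)*hd0 + (1/4)*hd1 + (1/4)*hd2 + (1/2)*hc0 + (1/2)*hc1 + (1/2)*hc2
  have hx : ‖eR Q‖ ^ 2 ≤ ψ₁ * (2 - ψ₁) := by
    rw [key]; nlinarith [hPsi, hψ₁']
  constructor
  · calc ‖eR Q‖ = Real.sqrt (‖eR Q‖ ^ 2) := (Real.sqrt_sq (norm_nonneg _)).symm
      _ ≤ Real.sqrt (ψ₁ * (2 - ψ₁)) := Real.sqrt_le_sqrt hx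
  · intro h
    rw [show (1 : ℝ) = Real.sqrt 1 from Real.sqrt_one.symm]
    exact Real.sqrt_lt_sqrt (by nlinarith) (by nlinarith)
end
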